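/- Let Λ = diag(λ_1,...,λ_n) with λ_v ∈ [0,1] and P̄ row-stochastic with all diagonal entries positive. Assume that for every node v there is a directed path in the graph of P̄ from v to some node s with λ_s < 1. Then the matrix Λ·P̄ is Schur stable, i.e., all its eigenvalues have modulus strictly less than 1. -/
import Mathlib


open Matrix

/-- Under the path-to-a-stubbornness-deficient-node condition, `Λ ⬝ P̄` is Schur
stable: all its (complex) eigenvalues have modulus strictly less than one. -/
theorem stmt_2 {n : ℕ} (Λ Pbar : Matrix (Fin n) (Fin n) ℝ) (lam : Fin n → ℝ)
    (hΛ : Λ = Matrix.diagonal lam)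
    (hlam : ∀ v, lam v ∈ Set.Icc (0 : ℝ) 1)
    (hP_nonneg : ∀ i j, 0 ≤ Pbar i j)
    (hP_rows : ∀ i, ∑ j, Pbar i j = 1)
    (hP_diag : ∀ i, 0 < Pbar i i)
    (hpath : ∀ v : Fin n, ∃ s : Fin n,
      Relation.ReflTransGen (fun a b : Fin n => 0 < Pbar a b) v s ∧ lam s < 1) :
    ∀ (μ : ℂ) (w : Fin n → ℂ), w ≠ 0 →
      ((Λ * Pbar).map (Complex.ofReal)).mulVec w = μ • w → ‖μ‖ < 1 := by
  intro μ w hw hev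
  by_contra hcon
  push_neg at hcon
  -- get a nonzero coordinate
  obtain ⟨i0, hi0⟩ : ∃ i, w i ≠ 0 := by
    by_contra h; push_neg at h; exact hw (funext h)
  -- maximizer
  obtain ⟨v0, -, hv0⟩ := Finset.exists_max_image Finset.univ (fun j => ‖w j‖)
    ⟨i0, Finset.mem_univ i0⟩
  set M := ‖w v0‖ with hM
  have hMpos : 0 < M := lt_of_lt_of_le (norm_pos_iff.mpr hi0) (hv0 i0 (Finset.mem_univ i0))
  have hle : ∀ j, ‖w j‖ ≤ M := fun j => hv0 j (Finset.mem_univ j)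
  -- eigen equation componentwise
  have hcomp : ∀ u, ∑ j, (lam u * Pbar u j : ℂ) * w j = μ * w u := by
    intro u
    have := congrFun hev u
    simpa [Matrix.mulVec, Matrix.map_apply, dotProduct, hΛ, Matrix.diagonal_mul,
      Pi.smul_apply, smul_eq_mul] using this
  -- key step
  have key : ∀ u, ‖w u‖ = M → lam u = 1 ∧ ∀ j, 0 < Pbar u j → ‖w j‖ = M := by
    intro u hu
    have h1 : ‖μ * w u‖ ≤ ∑ j, lam u * Pbar u j * ‖w j‖ := by
      rw [← hcomp u]
      refine le_trans (norm_sum_le _ _) (le_of_eq ?_)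
      refine Finset.sum_congr rfl fun j _ => ?_
      rw [norm_mul, ← Complex.ofReal_mul, Complex.norm_real, Real.norm_eq_abs,
        abs_of_nonneg (mul_nonneg (hlam u).1 (hP_nonneg u j))]
    have h2 : ∑ j, lam u * Pbar u j * ‖w j‖ ≤ lam u * M := by
      calc ∑ j, lam u * Pbar u j * ‖w j‖
          ≤ ∑ j, lam u * Pbar u j * M := by
            refine Finset.sum_le_sum fun j _ => ?_
            exact mul_le_mul_of_nonneg_left (hle j)
              (mul_nonneg (hlam u).1 (hP_nonneg u j))
        _ = lam u * M := by
            rw [← Finset.sum_mul, ← Finset.mul_sum, hP_rows u, mul_one]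
    have hμM : M ≤ ‖μ * w u‖ := by
      rw [norm_mul, hu]
      nlinarith [hMpos]
    have hlM : lam u * M ≤ M := by
      nlinarith [(hlam u).2, hMpos.le]
    have heqall : M = lam u * M := le_antisymm (hμM.trans (h1.trans h2)) hlM
    have hlamu : lam u = 1 :=
      mul_right_cancel₀ hMpos.ne' (by linarith : lam u * M = 1 * M)
    refine ⟨hlamu, ?_⟩
    -- now the middle sum equals M, forcing each term
    have hsumeq : ∑ j, Pbar u j * ‖w j‖ = ∑ j, Pbar u j * M := by
      have hup : ∑ j, lam u * Pbar u j * ‖w j‖ = M :=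
        le_antisymm (h2.trans hlM) (hμM.trans h1)
      have : ∑ j, Pbar u j * ‖w j‖ = M := by
        simpa [hlamu] using hup
      rw [this, ← Finset.sum_mul, hP_rows u, one_mul]
    intro j hj
    by_contra hne
    have hlt : Pbar u j * ‖w j‖ < Pbar u j * M :=
      mul_lt_mul_of_pos_left (lt_of_le_of_ne (hle j) hne) hj
    have : ∑ k, Pbar u k * ‖w k‖ < ∑ k, Pbar u k * M :=
      Finset.sum_lt_sum (fun k _ =>
        mul_le_mul_of_nonneg_left (hle k) (hP_nonneg u k))
        ⟨j, Finset.mem_univ j, hlt⟩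
    exact absurd hsumeq this.ne
  -- propagate along the path
  obtain ⟨s, hrel, hs⟩ := hpath v0
  have prop : ∀ {a b : Fin n}, Relation.ReflTransGen (fun a b => 0 < Pbar a b) a b →
      ‖w a‖ = M → ‖w b‖ = M := by
    intro a b h ha
    induction h with
    | refl => exact ha
    | tail _ hbc ih => exact (key _ ih).2 _ hbc
  have hsM : ‖w s‖ = M := prop hrel rfl
  exact absurd ((key s hsM).1) hs.ne
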